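/- With notation as follows: V a real vector space, v_1, …, v_d ∈ V linearly independent, σ^i = S(v_1,…,v_i), τ^{d−i} = S(v_{i+1},…,v_d), a, b > 0, A_i = a σ^i + b τ^{d−i} + b(v_1+⋯+v_i) for i ≥ 0, and B_i = a σ^{i−1} + b τ^{d−i} + b(v_1+⋯+v_i) for i ≥ 1. Then for each 1 ≤ i ≤ d, (A_0 ∪ ⋯ ∪ A_{i−1}) ∩ A_i = B_i. -/

import Mathlib

/-!
Write points of `V` in the basis coordinates `c : Fin d → ℝ`. For `p ≤ q`, the set
`a σ^p + b τ^{d-q} + b(v_1 + ⋯ + v_q)` consists of the `∑ c_t v_t` with `c` antitone,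
`0 ≤ c ≤ a + b`, `c_t ≥ b` for `t < q` and `c_t ≤ b` for `t ≥ p`: the first block of coordinates
is `b` plus an `a`-scaled staircase, the last block a `b`-scaled staircase, and the middle block
is pinned at `b`. In these coordinates intersecting two such sets takes the smaller `p` and the
larger `q`, so `A_j ∩ A_i` (for `j < i`) is the `(j, i)`-set, which grows with `j`; the union
over `j < i` is therefore the `(i - 1, i)`-set, which is `B_i`. Linear independence makes the
coordinate map injective, so it commutes with intersections.
-/

open scoped Pointwise

/-- `simplexS w` is the simplex `S(w_1, …, w_k) =
{ x_1 w_1 + ⋯ + x_k w_k : 1 ≥ x_1 ≥ ⋯ ≥ x_k ≥ 0 }`. -/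
def simplexS {V : Type*} [AddCommGroup V] [Module ℝ V] {k : ℕ} (w : Fin k → V) : Set V :=
  {y | ∃ x : Fin k → ℝ, (∀ i, 0 ≤ x i) ∧ (∀ i, x i ≤ 1) ∧
    (∀ i j : Fin k, i ≤ j → x j ≤ x i) ∧ y = ∑ i, x i • w i}

open Finset

def blockCoeffs (d : ℕ) (a b : ℝ) (p q : ℕ) : Set (Fin d → ℝ) :=
  {c | Antitone c ∧ (∀ t, 0 ≤ c t ∧ c t ≤ a + b) ∧ (∀ t : Fin d, t.1 < q → b ≤ c t) ∧
    ∀ t : Fin d, p ≤ t.1 → c t ≤ b}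

section BlockCoeffs

variable {d : ℕ}

theorem blockCoeffs_mono {a b : ℝ} {p p' q q' : ℕ} (hp : p ≤ p') (hq : q' ≤ q) :
    blockCoeffs d a b p q ⊆ blockCoeffs d a b p' q' :=
  fun _ ⟨hc, hbd, hlo, hhi⟩ =>
    ⟨hc, hbd, fun t ht => hlo t (by omega), fun t ht => hhi t (by omega)⟩

theorem blockCoeffs_inter (a b : ℝ) (p q p' q' : ℕ) :
    blockCoeffs d a b p q ∩ blockCoeffs d a b p' q' = blockCoeffs d a b (min p p') (max q q') := by
  ext c
  simp only [blockCoeffs, Set.mem_inter_iff, Set.mem_ofPred_eq, min_le_iff, lt_max_iff]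
  constructor
  · rintro ⟨⟨hc, hbd, hlo, hhi⟩, -, -, hlo', hhi'⟩
    exact ⟨hc, hbd, fun t ht => ht.elim (hlo t) (hlo' t), fun t ht => ht.elim (hhi t) (hhi' t)⟩
  · rintro ⟨hc, hbd, hlo, hhi⟩
    exact ⟨⟨hc, hbd, fun t ht => hlo t (.inl ht), fun t ht => hhi t (.inl ht)⟩,
      hc, hbd, fun t ht => hlo t (.inr ht), fun t ht => hhi t (.inr ht)⟩

theorem iUnion_blockCoeffs_inter (a b : ℝ) {n : ℕ} (i : Fin n) (hi : 1 ≤ i.1) :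
    (⋃ j : Fin n, ⋃ (_ : j.1 < i.1), blockCoeffs d a b j j) ∩ blockCoeffs d a b i i =
      blockCoeffs d a b (i - 1) i := by
  rw [Set.iUnion₂_inter]
  apply (Set.iUnion₂_subset fun j hj => ?_).antisymm
  · refine Set.subset_iUnion₂_of_subset (⟨i - 1, by omega⟩ : Fin n) (by simp; omega) ?_
    have h := blockCoeffs_inter (d := d) a b (i - 1) (i - 1) i i
    rw [min_eq_left (Nat.sub_le _ _), max_eq_right (Nat.sub_le _ _)] at h
    exact h.symm.subset
  · rw [blockCoeffs_inter, min_eq_left hj.le, max_eq_right hj.le]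
    exact blockCoeffs_mono (by omega) le_rfl

end BlockCoeffs

section FinSums

variable {M : Type*} [AddCommMonoid M] {d : ℕ}

theorem sum_fin_lt_eq_sum_filter {p : ℕ} (hp : p ≤ d) (g : Fin d → M) :
    ∑ t : Fin p, g ⟨t.1, by omega⟩ = ∑ t ∈ univ.filter (fun t : Fin d => t.1 < p), g t :=
  sum_bij' (fun t _ => ⟨t.1, by omega⟩) (fun t ht => ⟨t.1, by simpa using ht⟩)
    (by simp) (by simp) (by simp) (by simp) (by simp)

theorem sum_fin_sub_eq_sum_filter {q : ℕ} (hq : q ≤ d) (g : Fin d → M) :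
    ∑ t : Fin (d - q), g ⟨q + t.1, by omega⟩ =
      ∑ t ∈ univ.filter (fun t : Fin d => q ≤ t.1), g t :=
  sum_bij' (fun t _ => ⟨q + t.1, by omega⟩)
    (fun t ht => ⟨t.1 - q, by have := (mem_filter.mp ht).2; omega⟩)
    (by simp) (by simp) (by simp +contextual) (by simp +contextual) (by simp)

end FinSums

section Image

variable {V : Type*} [AddCommGroup V] [Module ℝ V] {d : ℕ}

theorem sum_smul_eq_of_eq_on_Ico (v : Fin d → V) {b : ℝ} {p q : ℕ} (hpq : p ≤ q) (hq : q ≤ d)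
    (c : Fin d → ℝ) (hmid : ∀ t : Fin d, p ≤ t.1 → t.1 < q → c t = b) :
    ∑ t : Fin p, (c ⟨t.1, by omega⟩ - b) • v ⟨t.1, by omega⟩
      + ∑ t : Fin (d - q), c ⟨q + t.1, by omega⟩ • v ⟨q + t.1, by omega⟩
      + b • ∑ t ∈ univ.filter (fun t : Fin d => t.1 < q), v t = ∑ t, c t • v t := by
  rw [sum_fin_lt_eq_sum_filter (hpq.trans hq) (fun t => (c t - b) • v t),
    sum_fin_sub_eq_sum_filter hq (fun t => c t • v t), smul_sum, sum_filter, sum_filter,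
    sum_filter, ← sum_add_distrib, ← sum_add_distrib]
  refine sum_congr rfl fun t _ => ?_
  by_cases htp : t.1 < p
  · simp [htp, show t.1 < q by omega, show ¬ q ≤ t.1 by omega, sub_smul]
  by_cases htq : t.1 < q
  · simp [htp, htq, show ¬ q ≤ t.1 by omega, hmid t (by omega) htq]
  · simp [htp, htq, show q ≤ t.1 by omega]

theorem antitone_of_antitone_ends {c : Fin d → ℝ} {b : ℝ} {p q : ℕ}
    (hlo : ∀ t : Fin d, t.1 < q → b ≤ c t) (hhi : ∀ t : Fin d, p ≤ t.1 → c t ≤ b)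
    (hhead : ∀ s t : Fin d, s ≤ t → t.1 < p → c t ≤ c s)
    (htail : ∀ s t : Fin d, s ≤ t → q ≤ s.1 → c t ≤ c s) : Antitone c := by
  intro s t hst
  by_cases htp : t.1 < p
  · exact hhead s t hst htp
  by_cases hsq : q ≤ s.1
  · exact htail s t hst hsq
  · exact (hhi t (by omega)).trans (hlo s (by omega))

theorem image_blockCoeffs_subset (v : Fin d → V) {a b : ℝ} (ha : 0 < a) (hb : 0 < b) {p q : ℕ}
    (hpq : p ≤ q) (hq : q ≤ d) :
    Fintype.linearCombination ℝ v '' blockCoeffs d a b p q ⊆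
      a • simplexS (fun t : Fin p => v ⟨t.1, by omega⟩)
        + b • simplexS (fun t : Fin (d - q) => v ⟨q + t.1, by omega⟩)
        + {b • ∑ t ∈ univ.filter (fun t : Fin d => t.1 < q), v t} := by
  rintro _ ⟨c, ⟨hc, hbd, hlo, hhi⟩, rfl⟩
  refine ⟨_, ⟨_, ⟨_, ⟨fun t => (c ⟨t.1, by omega⟩ - b) / a, ?_, ?_, ?_, rfl⟩, rfl⟩,
    _, ⟨_, ⟨fun t => c ⟨q + t.1, by omega⟩ / b, ?_, ?_, ?_, rfl⟩, rfl⟩, rfl⟩, _, rfl, ?_⟩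
  · exact fun t => div_nonneg (sub_nonneg.mpr (hlo _ (by simp; omega))) ha.le
  · exact fun t => (div_le_one ha).mpr (by linarith [(hbd ⟨t.1, by omega⟩).2])
  · exact fun s t hst => div_le_div_of_nonneg_right
      (sub_le_sub_right (hc (a := ⟨s.1, by omega⟩) (b := ⟨t.1, by omega⟩) hst) b) ha.le
  · exact fun t => div_nonneg (hbd _).1 hb.le
  · exact fun t => (div_le_one hb).mpr (hhi _ (by simp; omega))
  · exact fun s t hst =>
      div_le_div_of_nonneg_right (hc (Fin.mk_le_mk.mpr (by simpa using hst))) hb.le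
  · rw [Fintype.linearCombination_apply, ← sum_smul_eq_of_eq_on_Ico v hpq hq c
      (fun t h₁ h₂ => (hhi t h₁).antisymm (hlo t h₂))]
    beta_reduce
    simp only [smul_sum, smul_smul, mul_div_cancel₀ _ ha.ne', mul_div_cancel₀ _ hb.ne']

theorem subset_image_blockCoeffs (v : Fin d → V) {a b : ℝ} (ha : 0 < a) (hb : 0 < b) {p q : ℕ}
    (hpq : p ≤ q) (hq : q ≤ d) :
    a • simplexS (fun t : Fin p => v ⟨t.1, by omega⟩)
        + b • simplexS (fun t : Fin (d - q) => v ⟨q + t.1, by omega⟩)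
        + {b • ∑ t ∈ univ.filter (fun t : Fin d => t.1 < q), v t} ⊆
      Fintype.linearCombination ℝ v '' blockCoeffs d a b p q := by
  rintro _ ⟨_, ⟨_, ⟨_, ⟨x, hx0, hx1, hx, rfl⟩, rfl⟩, _, ⟨_, ⟨y, hy0, hy1, hy, rfl⟩, rfl⟩, rfl⟩,
    _, rfl, rfl⟩
  let c : Fin d → ℝ := fun t =>
    if h : t.1 < p then a * x ⟨t.1, h⟩ + b
    else if h' : q ≤ t.1 then b * y ⟨t.1 - q, by omega⟩ else b
  have hlo : ∀ t : Fin d, t.1 < q → b ≤ c t := by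
    intro t ht
    by_cases htp : t.1 < p
    · simp [c, htp, mul_nonneg ha.le (hx0 _)]
    · simp [c, htp, show ¬ q ≤ t.1 by omega]
  have hhi : ∀ t : Fin d, p ≤ t.1 → c t ≤ b := by
    intro t ht
    by_cases htq : q ≤ t.1
    · simpa [c, show ¬ t.1 < p by omega, htq] using mul_le_of_le_one_right hb.le (hy1 _)
    · simp [c, show ¬ t.1 < p by omega, htq]
  have hbd : ∀ t, 0 ≤ c t ∧ c t ≤ a + b := by
    intro t
    by_cases htp : t.1 < p
    · simp only [c, htp, dif_pos]
      constructor <;> nlinarith [hx0 ⟨t.1, htp⟩, hx1 ⟨t.1, htp⟩]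
    by_cases htq : q ≤ t.1
    · simp only [c, htp, htq, dif_pos, dif_neg, not_false_eq_true]
      constructor <;> nlinarith [hy0 ⟨t.1 - q, by omega⟩, hy1 ⟨t.1 - q, by omega⟩]
    · simp only [c, htp, htq, dif_neg, not_false_eq_true]
      constructor <;> linarith
  have hc : Antitone c := by
    refine antitone_of_antitone_ends hlo hhi (fun s t hst htp => ?_) (fun s t hst hsq => ?_)
    · simp only [c, htp, show s.1 < p by omega, dif_pos]
      nlinarith [hx ⟨s.1, by omega⟩ ⟨t.1, htp⟩ hst]
    · simp only [c, show ¬ s.1 < p by omega, show ¬ t.1 < p by omega, hsq,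
        show q ≤ t.1 by omega, dif_pos, dif_neg, not_false_eq_true]
      nlinarith [hy ⟨s.1 - q, by omega⟩ ⟨t.1 - q, by omega⟩ (by simp; omega)]
  refine ⟨c, ⟨hc, hbd, hlo, hhi⟩, ?_⟩
  rw [Fintype.linearCombination_apply, ← sum_smul_eq_of_eq_on_Ico v hpq hq c
    (fun t h₁ h₂ => (hhi t h₁).antisymm (hlo t h₂))]
  beta_reduce
  simp only [smul_sum, smul_smul]
  congr 2 <;> refine sum_congr rfl fun t _ => ?_
  · simp [c]
  · simp [c, show ¬ q + t.1 < p by omega]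

theorem image_blockCoeffs (v : Fin d → V) {a b : ℝ} (ha : 0 < a) (hb : 0 < b) {p q : ℕ}
    (hpq : p ≤ q) (hq : q ≤ d) :
    Fintype.linearCombination ℝ v '' blockCoeffs d a b p q =
      a • simplexS (fun t : Fin p => v ⟨t.1, by omega⟩)
        + b • simplexS (fun t : Fin (d - q) => v ⟨q + t.1, by omega⟩)
        + {b • ∑ t ∈ univ.filter (fun t : Fin d => t.1 < q), v t} :=
  (image_blockCoeffs_subset v ha hb hpq hq).antisymm (subset_image_blockCoeffs v ha hb hpq hq)

end Image

theorem stmt13 {V : Type*} [AddCommGroup V] [Module ℝ V] {d : ℕ}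
    (v : Fin d → V) (hv : LinearIndependent ℝ v) (a b : ℝ) (ha : 0 < a) (hb : 0 < b)
    -- `σ i = S(v_1, …, v_i)`:
    (σ : Fin (d + 1) → Set V)
    (hσ : ∀ i, σ i = simplexS (fun t : Fin i.1 => v (Fin.castLE i.is_le t)))
    -- `τ i = S(v_{i+1}, …, v_d)`:
    (τ : Fin (d + 1) → Set V)
    (hτ : ∀ i, τ i = simplexS (fun t : Fin (d - i.1) => v ⟨i.1 + t.1, by omega⟩))
    -- `A i = a σ^i + b τ^{d-i} + b(v_1 + ⋯ + v_i)`: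
    (A : Fin (d + 1) → Set V)
    (hA : ∀ i, A i = a • σ i + b • τ i
      + ({b • ∑ j ∈ Finset.univ.filter (fun j : Fin d => (j : ℕ) < i.1), v j} : Set V))
    -- `B i = a σ^{i-1} + b τ^{d-i} + b(v_1 + ⋯ + v_i)`, for `i ≥ 1`:
    (B : Fin (d + 1) → Set V)
    (hB : ∀ i : Fin (d + 1), 1 ≤ i.1 →
      B i = a • simplexS (fun t : Fin (i.1 - 1) => v ⟨t.1, by omega⟩) + b • τ i
        + ({b • ∑ j ∈ Finset.univ.filter (fun j : Fin d => (j : ℕ) < i.1), v j} : Set V)) :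
    ∀ i : Fin (d + 1), 1 ≤ i.1 →
      (⋃ j : Fin (d + 1), ⋃ (_ : j.1 < i.1), A j) ∩ A i = B i := by
  intro i hi
  have hA_coords (j : Fin (d + 1)) :
      A j = Fintype.linearCombination ℝ v '' blockCoeffs d a b j j := by
    rw [hA, hσ, hτ]
    exact (image_blockCoeffs v ha hb le_rfl j.is_le).symm
  have hL := linearIndependent_iff_injective_fintypeLinearCombination.mp hv
  rw [hB i hi, hτ, ← image_blockCoeffs v ha hb (Nat.sub_le _ _) i.is_le,
    ← iUnion_blockCoeffs_inter a b i hi, Set.image_inter hL, Set.image_iUnion₂]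
  simp only [hA_coords]
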